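/- arXiv:2005.11406 — 7 statements merged into one kernel-verified Lean document; each statement's English description precedes it below -/
import Mathlib

section
/- Let F and M be nonempty finite types, for each i : M let P_i be a pmf on F, let α : M → ℝ satisfy α i ≥ 0 and ∑_i α i = 1, and let P be the pooled pmf P f = ∑_i α i · P_i f. Then the supremum, over all admissible discriminators D, of the value V(D) = ∑_{i : M} α i · ∑_{f with P_i f > 0} P_i f · log (D f i) equals ∑_{i with α i > 0} α i · KL(P_i ‖ P) + ∑_{i with α i > 0} α i · log (α i). (Theorem: the optimal discriminator objective of unconditional adversarial domain generalization is the α-weighted KL divergence of the domain distributions to the pooled distribution, up to the constant ∑_i α i log α i.) -/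
/-- Kullback–Leibler divergence on a finite type:
`KL p q = ∑_{f with p f > 0} p f * log (p f / q f)`. -/
noncomputable def KL {F : Type*} [Fintype F] (p q : F → ℝ) : ℝ :=
  ∑ f ∈ Finset.univ.filter (fun f => 0 < p f), p f * Real.log (p f / q f)

/-- Pointwise Gibbs-type inequality via `log x ≤ x - 1`. -/
lemma adg_pointwise_gibbs {a p d q : ℝ} (ha : 0 < a) (hp : 0 < p) (hd : 0 < d) (hq : 0 < q) :
    a * (p * Real.log d) ≤ a * (p * Real.log (a * p / q)) + (d * q - a * p) := by
  have hr : 0 < a * p / q := div_pos (mul_pos ha hp) hq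
  have h2 : Real.log (d / (a * p / q)) ≤ d / (a * p / q) - 1 :=
    Real.log_le_sub_one_of_pos (div_pos hd hr)
  rw [Real.log_div (ne_of_gt hd) (ne_of_gt hr)] at h2
  have h3 := mul_le_mul_of_nonneg_left h2 (le_of_lt (mul_pos ha hp))
  have h4 : a * p * (d / (a * p / q)) = d * q := by field_simp
  nlinarith

/-- The optimal discriminator objective of unconditional adversarial domain
generalization equals the α-weighted KL divergence of the domain distributions
to the pooled distribution, up to the constant `∑ i, α i * log (α i)`. -/
theorem adg_kld_sup {F M : Type*} [Fintype F] [Nonempty F] [Fintype M] [Nonempty M]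
    (P : M → F → ℝ) (hPnn : ∀ i f, 0 ≤ P i f) (hPsum : ∀ i, ∑ f, P i f = 1)
    (α : M → ℝ) (hαnn : ∀ i, 0 ≤ α i) (hαsum : ∑ i, α i = 1)
    (Pool : F → ℝ) (hPool : ∀ f, Pool f = ∑ i, α i * P i f) :
    IsLUB
      { v : ℝ | ∃ D : F → M → ℝ,
          (∀ f i, 0 ≤ D f i) ∧ (∀ f, ∑ i, D f i = 1) ∧
          (∀ f i, 0 < α i * P i f → 0 < D f i) ∧
          v = ∑ i, α i *
                ∑ f ∈ Finset.univ.filter (fun f => 0 < P i f),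
                  P i f * Real.log (D f i) }
      ((∑ i ∈ Finset.univ.filter (fun i => 0 < α i), α i * KL (P i) Pool)
        + ∑ i ∈ Finset.univ.filter (fun i => 0 < α i), α i * Real.log (α i)) := by
  classical
  set S : M → Finset F := fun i => Finset.univ.filter (fun f => 0 < P i f) with hS
  set T : Finset M := Finset.univ.filter (fun i => 0 < α i) with hT
  -- basic facts
  have hSsum : ∀ i, ∑ f ∈ S i, P i f = 1 := by
    intro i
    rw [← hPsum i]
    exact Finset.sum_filter_of_ne (fun f _ hne => lt_of_le_of_ne (hPnn i f) (Ne.symm hne))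
  have hTsum : ∑ i ∈ T, α i = 1 := by
    rw [← hαsum]
    exact Finset.sum_filter_of_ne (fun i _ hne => lt_of_le_of_ne (hαnn i) (Ne.symm hne))
  have hPoolnn : ∀ f, 0 ≤ Pool f := by
    intro f; rw [hPool]
    exact Finset.sum_nonneg fun i _ => mul_nonneg (hαnn i) (hPnn i f)
  have hPoolsum : ∑ f, Pool f = 1 := by
    simp only [hPool]
    rw [Finset.sum_comm]
    simp only [← Finset.mul_sum, hPsum, mul_one, hαsum]
  have hPoolpos : ∀ i f, 0 < α i * P i f → 0 < Pool f := by
    intro i f h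
    have : α i * P i f ≤ Pool f := by
      rw [hPool]
      exact Finset.single_le_sum (fun j _ => mul_nonneg (hαnn j) (hPnn j f))
        (Finset.mem_univ i)
    linarith
  -- rewrite the target
  have targetEq :
      (∑ i ∈ T, α i * KL (P i) Pool) + ∑ i ∈ T, α i * Real.log (α i)
        = ∑ i ∈ T, α i * ∑ f ∈ S i, P i f * Real.log (α i * P i f / Pool f) := by
    rw [← Finset.sum_add_distrib]
    refine Finset.sum_congr rfl fun i hi => ?_
    have hαi : 0 < α i := (Finset.mem_filter.mp hi).2
    rw [← mul_add]
    congr 1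
    have : Real.log (α i) = ∑ f ∈ S i, P i f * Real.log (α i) := by
      rw [← Finset.sum_mul, hSsum, one_mul]
    have hKL : KL (P i) Pool = ∑ f ∈ S i, P i f * Real.log (P i f / Pool f) := rfl
    rw [hKL, this, ← Finset.sum_add_distrib]
    refine Finset.sum_congr rfl fun f hf => ?_
    have hPf : 0 < P i f := (Finset.mem_filter.mp hf).2
    have hq : 0 < Pool f := hPoolpos i f (mul_pos hαi hPf)
    rw [← mul_add, ← Real.log_mul (by positivity) (ne_of_gt hαi)]
    rw [div_mul_eq_mul_div, mul_comm (P i f) (α i)]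
  -- value of a discriminator restricted to T
  have valT : ∀ D : F → M → ℝ,
      (∑ i, α i * ∑ f ∈ S i, P i f * Real.log (D f i))
        = ∑ i ∈ T, α i * ∑ f ∈ S i, P i f * Real.log (D f i) := by
    intro D
    symm
    exact Finset.sum_filter_of_ne fun i _ hne => by
      by_contra h
      push_neg at h
      have : α i = 0 := le_antisymm h (hαnn i)
      simp [this] at hne
  constructor
  · -- upper bound
    rintro v ⟨D, hD0, hD1, hDadm, rfl⟩
    rw [targetEq, valT]
    have step : ∀ i ∈ T,
        α i * ∑ f ∈ S i, P i f * Real.log (D f i)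
          ≤ α i * ∑ f ∈ S i, P i f * Real.log (α i * P i f / Pool f)
            + ∑ f ∈ S i, (D f i * Pool f - α i * P i f) := by
      intro i hi
      have hαi : 0 < α i := (Finset.mem_filter.mp hi).2
      rw [Finset.mul_sum, Finset.mul_sum, ← Finset.sum_add_distrib]
      refine Finset.sum_le_sum fun f hf => ?_
      have hPf : 0 < P i f := (Finset.mem_filter.mp hf).2
      have hq : 0 < Pool f := hPoolpos i f (mul_pos hαi hPf)
      have hd : 0 < D f i := hDadm f i (mul_pos hαi hPf)
      exact adg_pointwise_gibbs hαi hPf hd hq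
    calc ∑ i ∈ T, α i * ∑ f ∈ S i, P i f * Real.log (D f i)
        ≤ ∑ i ∈ T, (α i * ∑ f ∈ S i, P i f * Real.log (α i * P i f / Pool f)
            + ∑ f ∈ S i, (D f i * Pool f - α i * P i f)) := Finset.sum_le_sum step
      _ = (∑ i ∈ T, α i * ∑ f ∈ S i, P i f * Real.log (α i * P i f / Pool f))
            + ((∑ i ∈ T, ∑ f ∈ S i, D f i * Pool f)
              - ∑ i ∈ T, ∑ f ∈ S i, α i * P i f) := by
          rw [Finset.sum_add_distrib]
          congr 1
          rw [← Finset.sum_sub_distrib]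
          exact Finset.sum_congr rfl fun i _ => Finset.sum_sub_distrib _ _
      _ ≤ ∑ i ∈ T, α i * ∑ f ∈ S i, P i f * Real.log (α i * P i f / Pool f) := by
          have hA : (∑ i ∈ T, ∑ f ∈ S i, D f i * Pool f) ≤ 1 := by
            calc ∑ i ∈ T, ∑ f ∈ S i, D f i * Pool f
                ≤ ∑ i ∈ T, ∑ f, D f i * Pool f := by
                  refine Finset.sum_le_sum fun i _ => ?_
                  refine Finset.sum_le_sum_of_subset_of_nonneg (Finset.filter_subset _ _)
                    fun f _ _ => mul_nonneg (hD0 f i) (hPoolnn f)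
              _ ≤ ∑ i, ∑ f, D f i * Pool f := by
                  refine Finset.sum_le_sum_of_subset_of_nonneg (Finset.filter_subset _ _)
                    fun i _ _ => Finset.sum_nonneg fun f _ =>
                      mul_nonneg (hD0 f i) (hPoolnn f)
              _ = 1 := by
                  rw [Finset.sum_comm]
                  calc ∑ f, ∑ i, D f i * Pool f
                      = ∑ f, Pool f := by
                        refine Finset.sum_congr rfl fun f _ => ?_
                        rw [← Finset.sum_mul, hD1 f, one_mul]
                    _ = 1 := hPoolsum
          have hB : (∑ i ∈ T, ∑ f ∈ S i, α i * P i f) = 1 := by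
            calc ∑ i ∈ T, ∑ f ∈ S i, α i * P i f
                = ∑ i ∈ T, α i := by
                  refine Finset.sum_congr rfl fun i _ => ?_
                  rw [← Finset.mul_sum, hSsum, mul_one]
              _ = 1 := hTsum
          linarith
  · -- least upper bound: the value is attained
    intro b hb
    refine hb ?_
    refine ⟨fun f i => if 0 < Pool f then α i * P i f / Pool f
      else (Fintype.card M : ℝ)⁻¹, ?_, ?_, ?_, ?_⟩
    · intro f i
      by_cases h : 0 < Pool f
      · simp only [if_pos h]
        exact div_nonneg (mul_nonneg (hαnn i) (hPnn i f)) (hPoolnn f)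
      · simp only [if_neg h]
        positivity
    · intro f
      by_cases h : 0 < Pool f
      · simp only [if_pos h]
        rw [← Finset.sum_div, ← hPool, div_self (ne_of_gt h)]
      · simp only [if_neg h, Finset.sum_const, Finset.card_univ, nsmul_eq_mul]
        exact mul_inv_cancel₀ (Nat.cast_ne_zero.mpr Fintype.card_ne_zero)
    · intro f i h
      have hq : 0 < Pool f := hPoolpos i f h
      simp only [if_pos hq]
      exact div_pos h hq
    · rw [targetEq, valT]
      refine Finset.sum_congr rfl fun i hi => ?_
      have hαi : 0 < α i := (Finset.mem_filter.mp hi).2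
      congr 1
      refine Finset.sum_congr rfl fun f hf => ?_
      have hPf : 0 < P i f := (Finset.mem_filter.mp hf).2
      have hq : 0 < Pool f := hPoolpos i f (mul_pos hαi hPf)
      rw [if_pos hq]
end

section
/- Let F and M be nonempty finite types, for each i : M let P_i be a pmf on F, let α : M → ℝ satisfy α i ≥ 0 and ∑_i α i = 1, and let P be the pooled pmf P f = ∑_i α i · P_i f. Define D* by D* f i = α i · P_i f / P f whenever P f > 0, and D* f i = 1/|M| whenever P f = 0. Then D* is an admissible discriminator and V(D*) = ∑_{i with α i > 0} α i · KL(P_i ‖ P) + ∑_{i with α i > 0} α i · log (α i); in particular D* attains the supremum of V over admissible discriminators. -/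
/-- The value of a discriminator `D` for unconditional adversarial domain
generalization. -/
noncomputable def Vadg {F M : Type*} [Fintype F] [Fintype M]
    (P : M → F → ℝ) (α : M → ℝ) (D : F → M → ℝ) : ℝ :=
  ∑ i, α i *
    ∑ f ∈ Finset.univ.filter (fun f => 0 < P i f), P i f * Real.log (D f i)

lemma gibbs_aux {M : Type*} [Fintype M] (u d : M → ℝ)
    (hu : ∀ i, 0 ≤ u i) (hd : ∀ i, 0 ≤ d i) (hds : ∑ i, d i ≤ 1)
    (hpos : ∀ i, 0 < u i → 0 < d i) (S : ℝ) (hS : ∑ i, u i = S) (hSpos : 0 < S) :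
    ∑ i, u i * Real.log (d i) ≤ ∑ i, u i * Real.log (u i / S) := by
  have key : ∀ i, u i * Real.log (d i) - u i * Real.log (u i / S) ≤ S * d i - u i := by
    intro i
    rcases eq_or_lt_of_le (hu i) with h | h
    · rw [← h]
      have : (0:ℝ) ≤ S * d i := mul_nonneg (le_of_lt hSpos) (hd i)
      simpa using this
    · have hdi := hpos i h
      have hq : 0 < u i / S := div_pos h hSpos
      have hlogd : Real.log (d i) - Real.log (u i / S) = Real.log (d i / (u i / S)) := by
        rw [Real.log_div (ne_of_gt hdi) (ne_of_gt hq)]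
      have hx : 0 < d i / (u i / S) := div_pos hdi hq
      have hlog : Real.log (d i / (u i / S)) ≤ d i / (u i / S) - 1 :=
        Real.log_le_sub_one_of_pos hx
      have hne : u i ≠ 0 := ne_of_gt h
      have hSne : S ≠ 0 := ne_of_gt hSpos
      calc u i * Real.log (d i) - u i * Real.log (u i / S)
          = u i * Real.log (d i / (u i / S)) := by rw [← mul_sub, hlogd]
        _ ≤ u i * (d i / (u i / S) - 1) :=
            mul_le_mul_of_nonneg_left hlog (le_of_lt h)
        _ = S * d i - u i := by field_simp
  have h1 : ∑ i, (u i * Real.log (d i) - u i * Real.log (u i / S)) ≤ ∑ i, (S * d i - u i) :=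
    Finset.sum_le_sum (fun i _ => key i)
  rw [Finset.sum_sub_distrib, Finset.sum_sub_distrib, ← Finset.mul_sum, hS] at h1
  nlinarith [hds, hSpos]

/-- Vadg rewritten as a full double sum over f then i. -/
lemma vadg_eq_double {F M : Type*} [Fintype F] [Fintype M]
    (P : M → F → ℝ) (hPnn : ∀ i f, 0 ≤ P i f) (α : M → ℝ) (D : F → M → ℝ) :
    Vadg P α D = ∑ f, ∑ i, (α i * P i f) * Real.log (D f i) := by
  unfold Vadg
  rw [← Finset.sum_comm]
  refine Finset.sum_congr rfl fun i _ => ?_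
  rw [Finset.mul_sum]
  rw [Finset.sum_filter_of_ne]
  · refine Finset.sum_congr rfl fun f _ => by ring
  · intro f _ hne
    by_contra hnot
    have : P i f = 0 := le_antisymm (not_lt.mp hnot) (hPnn i f)
    exact hne (by simp [this])

/-- The discriminator `D* f i = α i * P i f / Pool f` (and `1/|M|` where
`Pool f = 0`) is admissible and attains the supremum of the ADG-KLD objective,
whose value is the α-weighted KL divergence to the pooled distribution plus
the constant `∑ i, α i * log (α i)`. -/
theorem adg_kld_optimal_discriminator
    {F M : Type*} [Fintype F] [Nonempty F] [Fintype M] [Nonempty M]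
    (P : M → F → ℝ) (hPnn : ∀ i f, 0 ≤ P i f) (hPsum : ∀ i, ∑ f, P i f = 1)
    (α : M → ℝ) (hαnn : ∀ i, 0 ≤ α i) (hαsum : ∑ i, α i = 1)
    (Pool : F → ℝ) (hPool : ∀ f, Pool f = ∑ i, α i * P i f)
    (Dstar : F → M → ℝ)
    (hDstar : ∀ f i, (0 < Pool f → Dstar f i = α i * P i f / Pool f) ∧
                     (Pool f = 0 → Dstar f i = 1 / (Fintype.card M : ℝ))) :
    ((∀ f i, 0 ≤ Dstar f i) ∧ (∀ f, ∑ i, Dstar f i = 1) ∧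
      (∀ f i, 0 < α i * P i f → 0 < Dstar f i)) ∧
    Vadg P α Dstar =
      (∑ i ∈ Finset.univ.filter (fun i => 0 < α i), α i * KL (P i) Pool)
        + ∑ i ∈ Finset.univ.filter (fun i => 0 < α i), α i * Real.log (α i) ∧
    (∀ D : F → M → ℝ,
      (∀ f i, 0 ≤ D f i) → (∀ f, ∑ i, D f i = 1) →
      (∀ f i, 0 < α i * P i f → 0 < D f i) →
      Vadg P α D ≤ Vadg P α Dstar) := by
  have hu : ∀ i f, 0 ≤ α i * P i f := fun i f => mul_nonneg (hαnn i) (hPnn i f)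
  have hPoolnn : ∀ f, 0 ≤ Pool f := fun f => by
    rw [hPool f]; exact Finset.sum_nonneg fun i _ => hu i f
  have hle : ∀ i f, α i * P i f ≤ Pool f := fun i f => by
    rw [hPool f]
    exact Finset.single_le_sum (fun j _ => hu j f) (Finset.mem_univ i)
  have hcard : (0:ℝ) < (Fintype.card M : ℝ) := by
    exact_mod_cast Fintype.card_pos
  -- admissibility
  have hnn : ∀ f i, 0 ≤ Dstar f i := by
    intro f i
    rcases eq_or_lt_of_le (hPoolnn f) with h | h
    · rw [(hDstar f i).2 h.symm]; positivity
    · rw [(hDstar f i).1 h]; exact div_nonneg (hu i f) (le_of_lt h)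
  have hsum1 : ∀ f, ∑ i, Dstar f i = 1 := by
    intro f
    rcases eq_or_lt_of_le (hPoolnn f) with h | h
    · have : ∀ i, Dstar f i = 1 / (Fintype.card M : ℝ) := fun i => (hDstar f i).2 h.symm
      rw [Finset.sum_congr rfl fun i _ => this i]
      rw [Finset.sum_const, Finset.card_univ, nsmul_eq_mul]
      field_simp
    · have : ∀ i, Dstar f i = α i * P i f / Pool f := fun i => (hDstar f i).1 h
      rw [Finset.sum_congr rfl fun i _ => this i, ← Finset.sum_div, ← hPool f,
        div_self (ne_of_gt h)]
  have hadm : ∀ f i, 0 < α i * P i f → 0 < Dstar f i := by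
    intro f i hpos
    have hPf : 0 < Pool f := lt_of_lt_of_le hpos (hle i f)
    rw [(hDstar f i).1 hPf]
    exact div_pos hpos hPf
  refine ⟨⟨hnn, hsum1, hadm⟩, ?_, ?_⟩
  · -- value computation
    unfold Vadg
    rw [← Finset.sum_filter_of_ne (p := fun i => 0 < α i)
      (f := fun i => α i * ∑ f ∈ Finset.univ.filter (fun f => 0 < P i f),
        P i f * Real.log (Dstar f i))]
    · rw [← Finset.sum_add_distrib]
      refine Finset.sum_congr rfl fun i hi => ?_
      rw [Finset.mem_filter] at hi
      have hαi := hi.2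
      have hinner : ∑ f ∈ Finset.univ.filter (fun f => 0 < P i f),
          P i f * Real.log (Dstar f i)
          = KL (P i) Pool + Real.log (α i) := by
        unfold KL
        have : ∀ f ∈ Finset.univ.filter (fun f => 0 < P i f),
            P i f * Real.log (Dstar f i)
            = P i f * Real.log (P i f / Pool f) + P i f * Real.log (α i) := by
          intro f hf
          rw [Finset.mem_filter] at hf
          have hPif := hf.2
          have hposu : 0 < α i * P i f := mul_pos hαi hPif
          have hPf : 0 < Pool f := lt_of_lt_of_le hposu (hle i f)
          rw [(hDstar f i).1 hPf, mul_div_assoc,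
            Real.log_mul (ne_of_gt hαi) (ne_of_gt (div_pos hPif hPf))]
          ring
        rw [Finset.sum_congr rfl this, Finset.sum_add_distrib, ← Finset.sum_mul]
        have hsumf : ∑ f ∈ Finset.univ.filter (fun f => 0 < P i f), P i f = 1 := by
          rw [Finset.sum_filter_of_ne, hPsum i]
          intro f _ hne
          by_contra hnot
          exact hne (le_antisymm (not_lt.mp hnot) (hPnn i f))
        rw [hsumf, one_mul]
      rw [hinner]; ring
    · intro i _ hne
      by_contra hnot
      have : α i = 0 := le_antisymm (not_lt.mp hnot) (hαnn i)
      exact hne (by simp [this])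
  · -- optimality
    intro D hDnn hDsum hDpos
    rw [vadg_eq_double P hPnn, vadg_eq_double P hPnn]
    refine Finset.sum_le_sum fun f _ => ?_
    rcases eq_or_lt_of_le (hPoolnn f) with h | h
    · -- Pool f = 0: all coefficients vanish
      have hz : ∀ i, α i * P i f = 0 := by
        intro i
        have := (Finset.sum_eq_zero_iff_of_nonneg (fun i _ => hu i f)).mp
          ((hPool f ▸ h.symm : (∑ i, α i * P i f) = 0)) i (Finset.mem_univ i)
        exact this
      simp [hz]
    · have hstar : ∀ i, (α i * P i f) * Real.log (Dstar f i)
          = (α i * P i f) * Real.log ((α i * P i f) / Pool f) := by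
        intro i
        rw [(hDstar f i).1 h]
      rw [Finset.sum_congr rfl fun i _ => hstar i]
      exact gibbs_aux (fun i => α i * P i f) (fun i => D f i)
        (fun i => hu i f) (fun i => hDnn f i) (le_of_eq (hDsum f))
        (fun i => hDpos f i) (Pool f) (hPool f).symm h
end

section
/- Let F, M, K be nonempty finite types, for each i : M and k : K let P_{i,k} be a pmf on F, let β : K → ℝ satisfy β k ≥ 0 and ∑_k β k = 1, for each k let α^{(k)} : M → ℝ satisfy α^{(k)} i ≥ 0 and ∑_i α^{(k)} i = 1, and let P_k be the class-pooled pmf P_k f = ∑_i α^{(k)} i · P_{i,k} f. Then the supremum, over all admissible conditional discriminators D, of the value V(D) = ∑_{k : K} β k · ∑_{i : M} α^{(k)} i · ∑_{f with P_{i,k} f > 0} P_{i,k} f · log (D f k i) equals ∑_{k with β k > 0} β k · ∑_{i with α^{(k)} i > 0} α^{(k)} i · ( KL(P_{i,k} ‖ P_k) + log (α^{(k)} i) ). (Theorem: the optimal conditional discriminator objective of CADG-KLD is the weighted conditional KL divergence CKLD, up to the constant ∑_k β k ∑_i α^{(k)} i log α^{(k)} i.) -/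
private lemma gibbs_aux_s4 {M : Type*} [Fintype M] (w D : M → ℝ) (W : ℝ)
    (hw : ∀ i, 0 ≤ w i) (hW : ∑ i, w i = W) (hWpos : 0 < W)
    (hD : ∀ i, 0 ≤ D i) (hDsum : ∑ i, D i = 1)
    (hac : ∀ i, 0 < w i → 0 < D i) :
    ∑ i, w i * Real.log (D i) ≤ ∑ i, w i * Real.log (w i / W) := by
  have key : ∀ i, w i * Real.log (D i) - w i * Real.log (w i / W) ≤ D i * W - w i := by
    intro i
    rcases eq_or_lt_of_le (hw i) with h0 | hpos
    · rw [← h0]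
      have : 0 ≤ D i * W := mul_nonneg (hD i) hWpos.le
      simpa using this
    · have hDi := hac i hpos
      have harg : 0 < D i * W / w i := by positivity
      have hlog : Real.log (D i * W / w i) ≤ D i * W / w i - 1 :=
        Real.log_le_sub_one_of_pos harg
      have hrw : Real.log (D i) - Real.log (w i / W) = Real.log (D i * W / w i) := by
        rw [Real.log_div (by positivity) hWpos.ne', Real.log_div (by positivity) hpos.ne',
          Real.log_mul hDi.ne' hWpos.ne']
        ring
      calc w i * Real.log (D i) - w i * Real.log (w i / W)
          = w i * (Real.log (D i) - Real.log (w i / W)) := by ring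
        _ = w i * Real.log (D i * W / w i) := by rw [hrw]
        _ ≤ w i * (D i * W / w i - 1) := mul_le_mul_of_nonneg_left hlog (hw i)
        _ = D i * W - w i := by field_simp
  have hsum : ∑ i, (w i * Real.log (D i) - w i * Real.log (w i / W))
      ≤ ∑ i, (D i * W - w i) := Finset.sum_le_sum fun i _ => key i
  have hz : ∑ i, (D i * W - w i) = 0 := by
    rw [Finset.sum_sub_distrib, ← Finset.sum_mul, hDsum, hW]; ring
  rw [Finset.sum_sub_distrib, hz] at hsum
  linarith

/-- The optimal conditional discriminator objective of CADG-KLD equals the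
weighted conditional KL divergence `CKLD`, up to the constant
`∑_k β k ∑_i α^{(k)} i log (α^{(k)} i)`. -/
theorem cadg_kld_sup
    {F M K : Type*} [Fintype F] [Nonempty F] [Fintype M] [Nonempty M]
    [Fintype K] [Nonempty K]
    (P : M → K → F → ℝ) (hPnn : ∀ i k f, 0 ≤ P i k f)
    (hPsum : ∀ i k, ∑ f, P i k f = 1)
    (β : K → ℝ) (hβnn : ∀ k, 0 ≤ β k) (hβsum : ∑ k, β k = 1)
    (α : K → M → ℝ) (hαnn : ∀ k i, 0 ≤ α k i) (hαsum : ∀ k, ∑ i, α k i = 1)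
    (Pool : K → F → ℝ) (hPool : ∀ k f, Pool k f = ∑ i, α k i * P i k f) :
    IsLUB
      { v : ℝ | ∃ D : F → K → M → ℝ,
          (∀ f k i, 0 ≤ D f k i) ∧ (∀ f k, ∑ i, D f k i = 1) ∧
          (∀ f k i, 0 < β k * (α k i * P i k f) → 0 < D f k i) ∧
          v = ∑ k, β k * ∑ i, α k i *
                ∑ f ∈ Finset.univ.filter (fun f => 0 < P i k f),
                  P i k f * Real.log (D f k i) }
      (∑ k ∈ Finset.univ.filter (fun k => 0 < β k), β k *
        ∑ i ∈ Finset.univ.filter (fun i => 0 < α k i), α k i *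
          (KL (P i k) (Pool k) + Real.log (α k i))) := by
  classical
  have hPoolnn : ∀ k f, 0 ≤ Pool k f := fun k f => by
    rw [hPool]; exact Finset.sum_nonneg fun i _ => mul_nonneg (hαnn k i) (hPnn i k f)
  have hPoolge : ∀ k f i, α k i * P i k f ≤ Pool k f := fun k f i => by
    rw [hPool]
    exact Finset.single_le_sum (fun j _ => mul_nonneg (hαnn k j) (hPnn j k f))
      (Finset.mem_univ i)
  have hcard : (0 : ℝ) < (Fintype.card M : ℝ) := by
    exact_mod_cast Fintype.card_pos
  set Dstar : F → K → M → ℝ := fun f k i =>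
    if 0 < Pool k f then α k i * P i k f / Pool k f else (Fintype.card M : ℝ)⁻¹
    with hDstarDef
  have hDsnn : ∀ f k i, 0 ≤ Dstar f k i := by
    intro f k i
    simp only [hDstarDef]
    split
    · exact div_nonneg (mul_nonneg (hαnn k i) (hPnn i k f)) (hPoolnn k f)
    · positivity
  have hDssum : ∀ f k, ∑ i, Dstar f k i = 1 := by
    intro f k
    by_cases h : 0 < Pool k f
    · simp only [hDstarDef, if_pos h]
      rw [← Finset.sum_div, ← hPool, div_self h.ne']
    · simp only [hDstarDef, if_neg h]
      rw [Finset.sum_const, Finset.card_univ, nsmul_eq_mul, mul_inv_cancel₀ hcard.ne']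
  have hprodpos : ∀ f k i, 0 < β k * (α k i * P i k f) → 0 < α k i * P i k f := by
    intro f k i h
    rcases lt_or_eq_of_le (mul_nonneg (hαnn k i) (hPnn i k f)) with h' | h'
    · exact h'
    · exfalso; rw [← h', mul_zero] at h; exact lt_irrefl 0 h
  have hDsadm : ∀ f k i, 0 < β k * (α k i * P i k f) → 0 < Dstar f k i := by
    intro f k i h
    have hx := hprodpos f k i h
    have hPoolpos : 0 < Pool k f := lt_of_lt_of_le hx (hPoolge k f i)
    simp only [hDstarDef, if_pos hPoolpos]
    exact div_pos hx hPoolpos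
  -- unfiltering sums over f
  have unfilterF : ∀ (i : M) (k : K) (g : F → ℝ),
      ∑ f ∈ Finset.univ.filter (fun f => 0 < P i k f), P i k f * g f
        = ∑ f, P i k f * g f := by
    intro i k g
    refine Finset.sum_subset (Finset.filter_subset _ _) ?_
    intro f _ hf
    have : ¬ 0 < P i k f := by simpa using hf
    have : P i k f = 0 := le_antisymm (not_lt.mp this) (hPnn i k f)
    rw [this, zero_mul]
  have hPfil1 : ∀ (i : M) (k : K),
      ∑ f ∈ Finset.univ.filter (fun f => 0 < P i k f), P i k f = 1 := by
    intro i k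
    rw [← hPsum i k]
    refine Finset.sum_subset (Finset.filter_subset _ _) ?_
    intro f _ hf
    have : ¬ 0 < P i k f := by simpa using hf
    exact le_antisymm (not_lt.mp this) (hPnn i k f)
  -- reformulation of the objective
  have reform : ∀ D : F → K → M → ℝ,
      (∑ k, β k * ∑ i, α k i *
          ∑ f ∈ Finset.univ.filter (fun f => 0 < P i k f),
            P i k f * Real.log (D f k i))
        = ∑ k, β k * ∑ f, ∑ i, α k i * P i k f * Real.log (D f k i) := by
    intro D
    refine Finset.sum_congr rfl fun k _ => ?_
    congr 1
    rw [Finset.sum_comm]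
    refine Finset.sum_congr rfl fun i _ => ?_
    rw [unfilterF i k (fun f => Real.log (D f k i)), Finset.mul_sum]
    refine Finset.sum_congr rfl fun f _ => ?_
    ring
  -- the target equals the objective at Dstar
  have hT : (∑ k ∈ Finset.univ.filter (fun k => 0 < β k), β k *
        ∑ i ∈ Finset.univ.filter (fun i => 0 < α k i), α k i *
          (KL (P i k) (Pool k) + Real.log (α k i)))
      = ∑ k, β k * ∑ i, α k i *
          ∑ f ∈ Finset.univ.filter (fun f => 0 < P i k f),
            P i k f * Real.log (Dstar f k i) := by
    rw [show (∑ k ∈ Finset.univ.filter (fun k => 0 < β k), β k *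
        ∑ i ∈ Finset.univ.filter (fun i => 0 < α k i), α k i *
          (KL (P i k) (Pool k) + Real.log (α k i)))
        = ∑ k, β k * ∑ i, α k i * (KL (P i k) (Pool k) + Real.log (α k i)) from ?_]
    · refine Finset.sum_congr rfl fun k _ => ?_
      congr 1
      refine Finset.sum_congr rfl fun i _ => ?_
      rcases eq_or_lt_of_le (hαnn k i) with hα0 | hαpos
      · rw [← hα0, zero_mul, zero_mul]
      · -- α k i > 0
        congr 1
        have hl : Real.log (α k i)
            = ∑ f ∈ Finset.univ.filter (fun f => 0 < P i k f),
                P i k f * Real.log (α k i) := by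
          rw [← Finset.sum_mul, hPfil1 i k, one_mul]
        simp only [KL]
        rw [hl, ← Finset.sum_add_distrib]
        refine Finset.sum_congr rfl fun f hf => ?_
        have hPf : 0 < P i k f := (Finset.mem_filter.mp hf).2
        have hx : 0 < α k i * P i k f := mul_pos hαpos hPf
        have hPoolpos : 0 < Pool k f := lt_of_lt_of_le hx (hPoolge k f i)
        simp only [hDstarDef, if_pos hPoolpos]
        rw [Real.log_div hx.ne' hPoolpos.ne', Real.log_mul hαpos.ne' hPf.ne',
          Real.log_div hPf.ne' hPoolpos.ne']
        ring
    · calc (∑ k ∈ Finset.univ.filter (fun k => 0 < β k), β k *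
            ∑ i ∈ Finset.univ.filter (fun i => 0 < α k i), α k i *
              (KL (P i k) (Pool k) + Real.log (α k i)))
          = ∑ k, β k * ∑ i ∈ Finset.univ.filter (fun i => 0 < α k i), α k i *
              (KL (P i k) (Pool k) + Real.log (α k i)) := by
            refine Finset.sum_subset (Finset.filter_subset _ _) ?_
            intro k _ hk
            have : ¬ 0 < β k := by simpa using hk
            rw [le_antisymm (not_lt.mp this) (hβnn k), zero_mul]
        _ = ∑ k, β k * ∑ i, α k i * (KL (P i k) (Pool k) + Real.log (α k i)) := by
            refine Finset.sum_congr rfl fun k _ => ?_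
            congr 1
            refine Finset.sum_subset (Finset.filter_subset _ _) ?_
            intro i _ hi
            have : ¬ 0 < α k i := by simpa using hi
            rw [le_antisymm (not_lt.mp this) (hαnn k i), zero_mul]
  refine IsGreatest.isLUB ⟨⟨Dstar, hDsnn, hDssum, hDsadm, hT⟩, ?_⟩
  rintro v ⟨D, hDnn, hDsum, hDadm, rfl⟩
  rw [hT, reform D, reform Dstar]
  refine Finset.sum_le_sum fun k _ => ?_
  rcases eq_or_lt_of_le (hβnn k) with hβ0 | hβpos
  · rw [← hβ0, zero_mul, zero_mul]
  · refine mul_le_mul_of_nonneg_left (Finset.sum_le_sum fun f _ => ?_) hβpos.le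
    by_cases hPoolpos : 0 < Pool k f
    · have step : ∀ i, α k i * P i k f * Real.log (Dstar f k i)
          = α k i * P i k f * Real.log (α k i * P i k f / Pool k f) := by
        intro i; simp only [hDstarDef, if_pos hPoolpos]
      simp only [step]
      refine gibbs_aux_s4 (fun i => α k i * P i k f) (fun i => D f k i) (Pool k f)
        (fun i => mul_nonneg (hαnn k i) (hPnn i k f)) (hPool k f).symm hPoolpos
        (fun i => hDnn f k i) (hDsum f k) ?_
      intro i hi
      exact hDadm f k i (mul_pos hβpos hi)
    · -- Pool = 0 forces every α k i * P i k f = 0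
      have hPool0 : Pool k f = 0 := le_antisymm (not_lt.mp hPoolpos) (hPoolnn k f)
      have hall : ∀ i, α k i * P i k f = 0 := by
        intro i
        have h1 := hPoolge k f i
        rw [hPool0] at h1
        exact le_antisymm h1 (mul_nonneg (hαnn k i) (hPnn i k f))
      have e : ∀ (G : F → K → M → ℝ),
          ∑ i, α k i * P i k f * Real.log (G f k i) = 0 := by
        intro G
        refine Finset.sum_eq_zero fun i _ => ?_
        rw [hall i, zero_mul]
      rw [e D, e Dstar]
end

section
/- Let F, M, K be nonempty finite types, for each i : M and k : K let P_{i,k} be a pmf on F, let β : K → ℝ satisfy β k ≥ 0 and ∑_k β k = 1, for each k let α^{(k)} : M → ℝ satisfy α^{(k)} i ≥ 0 and ∑_i α^{(k)} i = 1, and let P_k be the class-pooled pmf P_k f = ∑_i α^{(k)} i · P_{i,k} f. Define D* by D* f k i = α^{(k)} i · P_{i,k} f / P_k f whenever P_k f > 0, and D* f k i = 1/|M| whenever P_k f = 0. Then D* is an admissible conditional discriminator and V(D*) = ∑_{k with β k > 0} β k · ∑_{i with α^{(k)} i > 0} α^{(k)} i · ( KL(P_{i,k} ‖ P_k) + log (α^{(k)}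 i) ); in particular D* attains the supremum of V over admissible conditional discriminators. -/
/-- The value of a conditional discriminator `D` for CADG-KLD. -/
noncomputable def Vcadg {F M K : Type*} [Fintype F] [Fintype M] [Fintype K]
    (P : M → K → F → ℝ) (β : K → ℝ) (α : K → M → ℝ) (D : F → K → M → ℝ) : ℝ :=
  ∑ k, β k * ∑ i, α k i *
    ∑ f ∈ Finset.univ.filter (fun f => 0 < P i k f),
      P i k f * Real.log (D f k i)

/-- The conditional discriminator `D* f k i = α^{(k)} i * P_{i,k} f / P_k f`
(and `1/|M|` where `P_k f = 0`) is admissible and attains the supremum of the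
CADG-KLD objective, whose value is the weighted conditional KL divergence plus
the constant `∑_k β k ∑_i α^{(k)} i log (α^{(k)} i)`. -/
theorem cadg_kld_optimal_discriminator
    {F M K : Type*} [Fintype F] [Nonempty F] [Fintype M] [Nonempty M]
    [Fintype K] [Nonempty K]
    (P : M → K → F → ℝ) (hPnn : ∀ i k f, 0 ≤ P i k f)
    (hPsum : ∀ i k, ∑ f, P i k f = 1)
    (β : K → ℝ) (hβnn : ∀ k, 0 ≤ β k) (hβsum : ∑ k, β k = 1)
    (α : K → M → ℝ) (hαnn : ∀ k i, 0 ≤ α k i) (hαsum : ∀ k, ∑ i, α k i = 1)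
    (Pool : K → F → ℝ) (hPool : ∀ k f, Pool k f = ∑ i, α k i * P i k f)
    (Dstar : F → K → M → ℝ)
    (hDstar : ∀ f k i,
      (0 < Pool k f → Dstar f k i = α k i * P i k f / Pool k f) ∧
      (Pool k f = 0 → Dstar f k i = 1 / (Fintype.card M : ℝ))) :
    ((∀ f k i, 0 ≤ Dstar f k i) ∧ (∀ f k, ∑ i, Dstar f k i = 1) ∧
      (∀ f k i, 0 < β k * (α k i * P i k f) → 0 < Dstar f k i)) ∧
    Vcadg P β α Dstar =
      ∑ k ∈ Finset.univ.filter (fun k => 0 < β k), β k *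
        ∑ i ∈ Finset.univ.filter (fun i => 0 < α k i), α k i *
          (KL (P i k) (Pool k) + Real.log (α k i)) ∧
    (∀ D : F → K → M → ℝ,
      (∀ f k i, 0 ≤ D f k i) → (∀ f k, ∑ i, D f k i = 1) →
      (∀ f k i, 0 < β k * (α k i * P i k f) → 0 < D f k i) →
      Vcadg P β α D ≤ Vcadg P β α Dstar) := by
  classical
  have hcardM : (Fintype.card M : ℝ) ≠ 0 := Nat.cast_ne_zero.mpr Fintype.card_ne_zero
  have hPoolnn : ∀ k f, 0 ≤ Pool k f := by
    intro k f; rw [hPool]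
    exact Finset.sum_nonneg fun i _ => mul_nonneg (hαnn k i) (hPnn i k f)
  have hPoolpos : ∀ k i f, 0 < α k i * P i k f → 0 < Pool k f := by
    intro k i f h
    have hle : α k i * P i k f ≤ Pool k f := by
      rw [hPool]
      exact Finset.single_le_sum (f := fun j => α k j * P j k f)
        (fun j _ => mul_nonneg (hαnn k j) (hPnn j k f)) (Finset.mem_univ i)
    linarith
  have hsuppP : ∀ i k, ∑ f ∈ Finset.univ.filter (fun f => 0 < P i k f), P i k f = 1 := by
    intro i k
    rw [Finset.sum_filter_of_ne (fun f _ hne => lt_of_le_of_ne (hPnn i k f) (Ne.symm hne))]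
    exact hPsum i k
  have hPoolsum : ∀ k, ∑ f, Pool k f = 1 := by
    intro k
    simp only [hPool]
    rw [Finset.sum_comm]
    have h1 : ∀ i : M, ∑ f, α k i * P i k f = α k i := by
      intro i; rw [← Finset.mul_sum, hPsum, mul_one]
    rw [Finset.sum_congr rfl (fun i _ => h1 i), hαsum]
  -- admissibility
  have hDnn : ∀ f k i, 0 ≤ Dstar f k i := by
    intro f k i
    rcases (hPoolnn k f).eq_or_lt with h | h
    · rw [(hDstar f k i).2 h.symm]; positivity
    · rw [(hDstar f k i).1 h]
      exact div_nonneg (mul_nonneg (hαnn k i) (hPnn i k f)) h.le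
  have hDsum : ∀ f k, ∑ i, Dstar f k i = 1 := by
    intro f k
    rcases (hPoolnn k f).eq_or_lt with h | h
    · rw [Finset.sum_congr rfl (fun i _ => (hDstar f k i).2 h.symm),
        Finset.sum_const, nsmul_eq_mul, Finset.card_univ, mul_one_div, div_self hcardM]
    · rw [Finset.sum_congr rfl (fun i _ => (hDstar f k i).1 h),
        ← Finset.sum_div, ← hPool, div_self h.ne']
  have hDpos : ∀ f k i, 0 < β k * (α k i * P i k f) → 0 < Dstar f k i := by
    intro f k i h
    have hαP : 0 < α k i * P i k f := by
      rcases mul_pos_iff.mp h with ⟨_, h2⟩ | ⟨h1, _⟩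
      · exact h2
      · exact absurd h1 (not_lt.mpr (hβnn k))
    have hp : 0 < Pool k f := hPoolpos k i f hαP
    rw [(hDstar f k i).1 hp]
    exact div_pos hαP hp
  refine ⟨⟨hDnn, hDsum, hDpos⟩, ?_, ?_⟩
  · -- value of Dstar
    unfold Vcadg
    rw [← Finset.sum_filter_of_ne (p := fun k => 0 < β k)
      (fun k _ hne => lt_of_le_of_ne (hβnn k) (Ne.symm (left_ne_zero_of_mul hne)))]
    refine Finset.sum_congr rfl fun k hk => ?_
    congr 1
    rw [← Finset.sum_filter_of_ne (p := fun i => 0 < α k i)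
      (fun i _ hne => lt_of_le_of_ne (hαnn k i) (Ne.symm (left_ne_zero_of_mul hne)))]
    refine Finset.sum_congr rfl fun i hi => ?_
    have hαi : 0 < α k i := (Finset.mem_filter.mp hi).2
    congr 1
    have hterm : ∀ f ∈ Finset.univ.filter (fun f => 0 < P i k f),
        P i k f * Real.log (Dstar f k i)
          = P i k f * Real.log (P i k f / Pool k f) + P i k f * Real.log (α k i) := by
      intro f hf
      have hf' : 0 < P i k f := (Finset.mem_filter.mp hf).2
      have hp : 0 < Pool k f := hPoolpos k i f (mul_pos hαi hf')
      rw [(hDstar f k i).1 hp, mul_div_assoc,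
        Real.log_mul hαi.ne' (div_pos hf' hp).ne']
      ring
    rw [Finset.sum_congr rfl hterm, Finset.sum_add_distrib, ← Finset.sum_mul,
      hsuppP, one_mul]
    rfl
  · -- optimality
    intro D hDnn' hDsum' hDpos'
    unfold Vcadg
    apply Finset.sum_le_sum
    intro k _
    rcases (hβnn k).eq_or_lt with hb | hb
    · rw [← hb]; simp
    · refine mul_le_mul_of_nonneg_left ?_ (hβnn k)
      rw [← sub_nonpos, ← Finset.sum_sub_distrib]
      rw [← Finset.sum_filter_of_ne (p := fun i => 0 < α k i)
        (fun i _ hne => lt_of_le_of_ne (hαnn k i)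
          (fun h0 => hne (by rw [← h0]; ring)))]
      have hB : ∑ i ∈ Finset.univ.filter (fun i => 0 < α k i),
          ∑ f ∈ Finset.univ.filter (fun f => 0 < P i k f), α k i * P i k f = 1 := by
        have h1 : ∀ i ∈ Finset.univ.filter (fun i => 0 < α k i),
            ∑ f ∈ Finset.univ.filter (fun f => 0 < P i k f), α k i * P i k f = α k i := by
          intro i _
          rw [← Finset.mul_sum, hsuppP, mul_one]
        rw [Finset.sum_congr rfl h1,
          Finset.sum_filter_of_ne (fun i _ hne => lt_of_le_of_ne (hαnn k i) (Ne.symm hne)),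
          hαsum]
      have hA : ∑ i ∈ Finset.univ.filter (fun i => 0 < α k i),
          ∑ f ∈ Finset.univ.filter (fun f => 0 < P i k f), D f k i * Pool k f ≤ 1 := by
        have h1 : ∑ i ∈ Finset.univ.filter (fun i => 0 < α k i),
            ∑ f ∈ Finset.univ.filter (fun f => 0 < P i k f), D f k i * Pool k f
            ≤ ∑ i : M, ∑ f : F, D f k i * Pool k f := by
          refine le_trans (Finset.sum_le_sum fun i _ =>
            Finset.sum_le_sum_of_subset_of_nonneg (Finset.filter_subset _ _)
              (fun f _ _ => mul_nonneg (hDnn' f k i) (hPoolnn k f))) ?_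
          exact Finset.sum_le_sum_of_subset_of_nonneg (Finset.filter_subset _ _)
            (fun i _ _ => Finset.sum_nonneg fun f _ =>
              mul_nonneg (hDnn' f k i) (hPoolnn k f))
        have h2 : ∑ i : M, ∑ f : F, D f k i * Pool k f = 1 := by
          rw [Finset.sum_comm]
          have h3 : ∀ f : F, ∑ i, D f k i * Pool k f = Pool k f := by
            intro f; rw [← Finset.sum_mul, hDsum' f k, one_mul]
          rw [Finset.sum_congr rfl (fun f _ => h3 f), hPoolsum]
        linarith
      calc ∑ i ∈ Finset.univ.filter (fun i => 0 < α k i),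
            (α k i * ∑ f ∈ Finset.univ.filter (fun f => 0 < P i k f),
                P i k f * Real.log (D f k i)
              - α k i * ∑ f ∈ Finset.univ.filter (fun f => 0 < P i k f),
                P i k f * Real.log (Dstar f k i))
          ≤ ∑ i ∈ Finset.univ.filter (fun i => 0 < α k i),
            (∑ f ∈ Finset.univ.filter (fun f => 0 < P i k f), D f k i * Pool k f
              - ∑ f ∈ Finset.univ.filter (fun f => 0 < P i k f), α k i * P i k f) := by
            refine Finset.sum_le_sum fun i hi => ?_
            have hαi : 0 < α k i := (Finset.mem_filter.mp hi).2
            rw [← mul_sub, ← Finset.sum_sub_distrib, Finset.mul_sum,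
              ← Finset.sum_sub_distrib]
            refine Finset.sum_le_sum fun f hf => ?_
            have hf' : 0 < P i k f := (Finset.mem_filter.mp hf).2
            have hαP : 0 < α k i * P i k f := mul_pos hαi hf'
            have hp : 0 < Pool k f := hPoolpos k i f hαP
            have hDs : Dstar f k i = α k i * P i k f / Pool k f := (hDstar f k i).1 hp
            have hDspos : 0 < Dstar f k i := by rw [hDs]; exact div_pos hαP hp
            have hDp : 0 < D f k i := hDpos' f k i (mul_pos hb hαP)
            have heq : α k i * (P i k f * Real.log (D f k i)
                - P i k f * Real.log (Dstar f k i))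
                = (α k i * P i k f) * Real.log (D f k i / Dstar f k i) := by
              rw [Real.log_div hDp.ne' hDspos.ne']; ring
            rw [heq]
            calc (α k i * P i k f) * Real.log (D f k i / Dstar f k i)
                ≤ (α k i * P i k f) * (D f k i / Dstar f k i - 1) :=
                  mul_le_mul_of_nonneg_left
                    (Real.log_le_sub_one_of_pos (div_pos hDp hDspos)) hαP.le
              _ = D f k i * Pool k f - α k i * P i k f := by
                  rw [hDs]; field_simp
        _ = (∑ i ∈ Finset.univ.filter (fun i => 0 < α k i),
              ∑ f ∈ Finset.univ.filter (fun f => 0 < P i k f), D f k i * Pool k f)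
            - (∑ i ∈ Finset.univ.filter (fun i => 0 < α k i),
              ∑ f ∈ Finset.univ.filter (fun f => 0 < P i k f), α k i * P i k f) :=
            Finset.sum_sub_distrib _ _
        _ ≤ 0 := by rw [hB]; linarith
end

section
/- Let F, M, K be nonempty finite types, for each i : M and k : K let P_{i,k} be a pmf on F, let β : K → ℝ satisfy β k ≥ 0 and ∑_k β k = 1, for each k let α^{(k)} : M → ℝ satisfy α^{(k)} i ≥ 0 and ∑_i α^{(k)} i = 1, and let P_k be the class-pooled pmf P_k f = ∑_i α^{(k)} i · P_{i,k} f. Then the supremum, over all admissible binary discriminators D : F × M × K → [0,1], of the value W(D) = ∑_{k : K} β k · ∑_{i : M} α^{(k)} i · ( ∑_{f with P_{i,k} f > 0} P_{i,k} f · log (D (f,i,k)) + ∑_{f with P_k f > 0} P_k f · log (1 − D (f,i,k)) ) equals 2 · ( ∑_{k with β k > 0} β k · ∑_{i with α^{(k)} i > 0} α^{(k)} i · JSD(P_{i,k} ‖ P_k) ) − log 4. (Theorem: the optimal binary discriminator objective of CADG-JSD is twice the weighted conditional Jensen–Shannon divergence CJSD, up to the constant −log 4.) -/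
/-- Jensen–Shannon divergence on a finite type:
`JSD p q = (1/2) KL(p ‖ m) + (1/2) KL(q ‖ m)` with `m = (p + q)/2`. -/
noncomputable def JSD {F : Type*} [Fintype F] (p q : F → ℝ) : ℝ :=
  (1 / 2) * KL p (fun f => (p f + q f) / 2) +
  (1 / 2) * KL q (fun f => (p f + q f) / 2)

lemma aux_log_le {a b d : ℝ} (ha : 0 ≤ a) (hb : 0 ≤ b)
    (hd0 : 0 < d) (hd1 : d < 1) :
    a * Real.log d + b * Real.log (1 - d) ≤
      a * Real.log (a / (a + b)) + b * Real.log (b / (a + b)) := by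
  have hld : Real.log d ≤ 0 := Real.log_nonpos hd0.le hd1.le
  have hl1d : Real.log (1 - d) ≤ 0 := Real.log_nonpos (by linarith) (by linarith)
  rcases eq_or_lt_of_le ha with rfl | ha
  · rcases eq_or_lt_of_le hb with rfl | hb
    · simp
    · simp only [zero_mul, zero_add, Real.log_one, div_self hb.ne']
      nlinarith
  · rcases eq_or_lt_of_le hb with rfl | hb
    · simp only [zero_mul, add_zero, Real.log_one, div_self ha.ne', mul_zero]
      nlinarith
    · have hc : 0 < a + b := by linarith
      have hx1 : (0:ℝ) < d * (a + b) / a := by positivity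
      have hx2 : (0:ℝ) < (1 - d) * (a + b) / b := by
        have : 0 < 1 - d := by linarith
        positivity
      have h1 : Real.log d = Real.log (a / (a + b)) + Real.log (d * (a + b) / a) := by
        rw [← Real.log_mul (by positivity) (ne_of_gt hx1)]
        congr 1
        field_simp
      have h2 : Real.log (1 - d) = Real.log (b / (a + b)) + Real.log ((1 - d) * (a + b) / b) := by
        rw [← Real.log_mul (by positivity) (ne_of_gt hx2)]
        congr 1
        field_simp
      have l1 : Real.log (d * (a + b) / a) ≤ d * (a + b) / a - 1 :=
        Real.log_le_sub_one_of_pos hx1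
      have l2 : Real.log ((1 - d) * (a + b) / b) ≤ (1 - d) * (a + b) / b - 1 :=
        Real.log_le_sub_one_of_pos hx2
      have m1 : a * Real.log (d * (a + b) / a) ≤ d * (a + b) - a := by
        have := mul_le_mul_of_nonneg_left l1 ha.le
        have e : a * (d * (a + b) / a - 1) = d * (a + b) - a := by field_simp
        linarith [e ▸ this]
      have m2 : b * Real.log ((1 - d) * (a + b) / b) ≤ (1 - d) * (a + b) - b := by
        have := mul_le_mul_of_nonneg_left l2 hb.le
        have e : b * ((1 - d) * (a + b) / b - 1) = (1 - d) * (a + b) - b := by field_simp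
        linarith [e ▸ this]
      rw [h1, h2]
      nlinarith

lemma sum_filter_ext {F : Type*} [Fintype F] (p : F → ℝ) (hp : ∀ f, 0 ≤ p f)
    (c : F → Prop) [DecidablePred c] (hc : ∀ f, 0 < p f → c f) (g : F → ℝ) :
    ∑ f ∈ Finset.univ.filter (fun f => 0 < p f), p f * g f
      = ∑ f ∈ Finset.univ.filter c, p f * g f := by
  apply Finset.sum_subset
  · intro f hf
    simp only [Finset.mem_filter, Finset.mem_univ, true_and] at hf ⊢
    exact hc f hf
  · intro f _ hf
    have : p f = 0 := le_antisymm (by simpa using hf) (hp f)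
    simp [this]

lemma kl_half {F : Type*} [Fintype F] (p q : F → ℝ) (hp : ∀ f, 0 ≤ p f)
    (hq : ∀ f, 0 ≤ q f) (hs : ∑ f, p f = 1) :
    ∑ f ∈ Finset.univ.filter (fun f => 0 < p f), p f * Real.log (p f / (p f + q f))
      = KL p (fun f => (p f + q f) / 2) - Real.log 2 := by
  unfold KL
  have hone : ∑ f ∈ Finset.univ.filter (fun f => 0 < p f), p f = 1 := by
    rw [← hs]
    apply Finset.sum_subset (Finset.filter_subset _ _)
    intro f _ hf
    exact le_antisymm (by simpa using hf) (hp f)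
  have h1 : ∑ f ∈ Finset.univ.filter (fun f => 0 < p f),
      p f * Real.log (p f / ((p f + q f) / 2))
    = ∑ f ∈ Finset.univ.filter (fun f => 0 < p f),
      (p f * Real.log 2 + p f * Real.log (p f / (p f + q f))) := by
    apply Finset.sum_congr rfl
    intro f hf
    have hpf : 0 < p f := by simpa using hf
    have hpq : 0 < p f + q f := by linarith [hq f]
    have e : p f / ((p f + q f) / 2) = 2 * (p f / (p f + q f)) := by
      field_simp
    rw [e, Real.log_mul two_ne_zero (ne_of_gt (div_pos hpf hpq))]
    ring
  rw [h1, Finset.sum_add_distrib, ← Finset.sum_mul, hone]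
  ring

/-- The optimal binary discriminator objective of CADG-JSD equals twice the
weighted conditional Jensen–Shannon divergence `CJSD`, up to the constant
`- log 4`. -/
theorem cadg_jsd_sup
    {F M K : Type*} [Fintype F] [Nonempty F] [Fintype M] [Nonempty M]
    [Fintype K] [Nonempty K]
    (P : M → K → F → ℝ) (hPnn : ∀ i k f, 0 ≤ P i k f)
    (hPsum : ∀ i k, ∑ f, P i k f = 1)
    (β : K → ℝ) (hβnn : ∀ k, 0 ≤ β k) (hβsum : ∑ k, β k = 1)
    (α : K → M → ℝ) (hαnn : ∀ k i, 0 ≤ α k i) (hαsum : ∀ k, ∑ i, α k i = 1)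
    (Pool : K → F → ℝ) (hPool : ∀ k f, Pool k f = ∑ i, α k i * P i k f) :
    IsLUB
      { v : ℝ | ∃ D : F × M × K → ℝ,
          (∀ f i k, 0 ≤ D (f, i, k) ∧ D (f, i, k) ≤ 1) ∧
          (∀ f i k, 0 < β k * (α k i * (P i k f + Pool k f)) →
            0 < D (f, i, k) ∧ D (f, i, k) < 1) ∧
          v = ∑ k, β k * ∑ i, α k i *
                ((∑ f ∈ Finset.univ.filter (fun f => 0 < P i k f),
                    P i k f * Real.log (D (f, i, k))) +
                 (∑ f ∈ Finset.univ.filter (fun f => 0 < Pool k f),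
                    Pool k f * Real.log (1 - D (f, i, k)))) }
      (2 * (∑ k ∈ Finset.univ.filter (fun k => 0 < β k), β k *
              ∑ i ∈ Finset.univ.filter (fun i => 0 < α k i), α k i *
                JSD (P i k) (Pool k))
        - Real.log 4) := by
  classical
  have hPoolnn : ∀ k f, 0 ≤ Pool k f := fun k f => by
    rw [hPool]
    exact Finset.sum_nonneg fun i _ => mul_nonneg (hαnn k i) (hPnn i k f)
  have hPoolsum : ∀ k, ∑ f, Pool k f = 1 := by
    intro k
    calc ∑ f, Pool k f = ∑ f, ∑ i, α k i * P i k f := by simp [hPool]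
      _ = ∑ i, ∑ f, α k i * P i k f := Finset.sum_comm
      _ = ∑ i, α k i * ∑ f, P i k f := by simp [Finset.mul_sum]
      _ = 1 := by simp [hPsum, hαsum k]
  -- the per-(i,k) optimal value, in sum form
  have hT : ∀ i k,
      ((∑ f ∈ Finset.univ.filter (fun f => 0 < P i k f),
          P i k f * Real.log (P i k f / (P i k f + Pool k f))) +
       (∑ f ∈ Finset.univ.filter (fun f => 0 < Pool k f),
          Pool k f * Real.log (Pool k f / (P i k f + Pool k f))))
      = 2 * JSD (P i k) (Pool k) - Real.log 4 := by
    intro i k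
    have h1 := kl_half (P i k) (Pool k) (hPnn i k) (hPoolnn k) (hPsum i k)
    have h2 := kl_half (Pool k) (P i k) (hPoolnn k) (fun f => hPnn i k f) (hPoolsum k)
    have e2 : (fun f => (Pool k f + P i k f) / 2) = (fun f => (P i k f + Pool k f) / 2) := by
      funext f; ring
    rw [e2] at h2
    have e3 : ∀ f, Pool k f / (Pool k f + P i k f) = Pool k f / (P i k f + Pool k f) := by
      intro f; rw [add_comm]
    simp only [e3] at h2
    have h4 : Real.log 4 = 2 * Real.log 2 := by
      rw [show (4:ℝ) = 2 ^ 2 by norm_num, Real.log_pow]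
      push_cast
      ring
    rw [h1, h2, h4]
    simp only [JSD]
    ring
  -- removing the positivity filters on β and α
  have hβzero : ∀ g : K → ℝ,
      ∑ k ∈ Finset.univ.filter (fun k => 0 < β k), β k * g k = ∑ k, β k * g k := by
    intro g
    apply Finset.sum_subset (Finset.filter_subset _ _)
    intro k _ hk
    have : β k = 0 := le_antisymm (by simpa using hk) (hβnn k)
    simp [this]
  have hαzero : ∀ k (g : M → ℝ),
      ∑ i ∈ Finset.univ.filter (fun i => 0 < α k i), α k i * g i = ∑ i, α k i * g i := by
    intro k g
    apply Finset.sum_subset (Finset.filter_subset _ _)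
    intro i _ hi
    have : α k i = 0 := le_antisymm (by simpa using hi) (hαnn k i)
    simp [this]
  -- the target in sum form
  have hRHS :
      2 * (∑ k ∈ Finset.univ.filter (fun k => 0 < β k), β k *
              ∑ i ∈ Finset.univ.filter (fun i => 0 < α k i), α k i *
                JSD (P i k) (Pool k))
        - Real.log 4
      = ∑ k, β k * ∑ i, α k i *
          ((∑ f ∈ Finset.univ.filter (fun f => 0 < P i k f),
              P i k f * Real.log (P i k f / (P i k f + Pool k f))) +
           (∑ f ∈ Finset.univ.filter (fun f => 0 < Pool k f),
              Pool k f * Real.log (Pool k f / (P i k f + Pool k f)))) := by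
    have step1 : ∀ k, ∑ i ∈ Finset.univ.filter (fun i => 0 < α k i),
        α k i * JSD (P i k) (Pool k) = ∑ i, α k i * JSD (P i k) (Pool k) :=
      fun k => hαzero k _
    simp only [step1]
    rw [hβzero (fun k => ∑ i, α k i * JSD (P i k) (Pool k))]
    have hinner : ∀ k, ∑ i, α k i * (2 * JSD (P i k) (Pool k) - Real.log 4)
        = 2 * (∑ i, α k i * JSD (P i k) (Pool k)) - Real.log 4 := by
      intro k
      calc ∑ i, α k i * (2 * JSD (P i k) (Pool k) - Real.log 4)
          = ∑ i, (2 * (α k i * JSD (P i k) (Pool k)) - α k i * Real.log 4) :=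
            Finset.sum_congr rfl fun i _ => by ring
        _ = 2 * (∑ i, α k i * JSD (P i k) (Pool k)) - (∑ i, α k i) * Real.log 4 := by
            rw [Finset.sum_sub_distrib, ← Finset.mul_sum, Finset.sum_mul]
        _ = _ := by rw [hαsum k]; ring
    have houter :
        ∑ k, β k * (2 * (∑ i, α k i * JSD (P i k) (Pool k)) - Real.log 4)
        = 2 * (∑ k, β k * ∑ i, α k i * JSD (P i k) (Pool k)) - Real.log 4 := by
      calc ∑ k, β k * (2 * (∑ i, α k i * JSD (P i k) (Pool k)) - Real.log 4)
          = ∑ k, (2 * (β k * ∑ i, α k i * JSD (P i k) (Pool k)) - β k * Real.log 4) :=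
            Finset.sum_congr rfl fun k _ => by ring
        _ = 2 * (∑ k, β k * ∑ i, α k i * JSD (P i k) (Pool k)) - (∑ k, β k) * Real.log 4 := by
            rw [Finset.sum_sub_distrib, ← Finset.mul_sum, Finset.sum_mul]
        _ = _ := by rw [hβsum]; ring
    calc 2 * (∑ k, β k * ∑ i, α k i * JSD (P i k) (Pool k)) - Real.log 4
        = ∑ k, β k * (2 * (∑ i, α k i * JSD (P i k) (Pool k)) - Real.log 4) := houter.symm
      _ = ∑ k, β k * ∑ i, α k i * (2 * JSD (P i k) (Pool k) - Real.log 4) := by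
          exact Finset.sum_congr rfl fun k _ => by rw [hinner k]
      _ = _ := by
          apply Finset.sum_congr rfl
          intro k _
          congr 1
          apply Finset.sum_congr rfl
          intro i _
          rw [hT i k]
  rw [hRHS]
  constructor
  · -- upper bound
    rintro v ⟨D, hD01, hadm, rfl⟩
    apply Finset.sum_le_sum
    intro k _
    rcases eq_or_lt_of_le (hβnn k) with hk | hk
    · rw [← hk]; simp
    · apply mul_le_mul_of_nonneg_left _ (hβnn k)
      apply Finset.sum_le_sum
      intro i _
      rcases eq_or_lt_of_le (hαnn k i) with hi | hi
      · rw [← hi]; simp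
      · apply mul_le_mul_of_nonneg_left _ (hαnn k i)
        have r1 := sum_filter_ext (P i k) (hPnn i k)
          (fun f => 0 < P i k f + Pool k f)
          (fun f h => by have := hPoolnn k f; linarith)
          (fun f => Real.log (D (f, i, k)))
        have r2 := sum_filter_ext (Pool k) (hPoolnn k)
          (fun f => 0 < P i k f + Pool k f)
          (fun f h => by have := hPnn i k f; linarith)
          (fun f => Real.log (1 - D (f, i, k)))
        have r3 := sum_filter_ext (P i k) (hPnn i k)
          (fun f => 0 < P i k f + Pool k f)
          (fun f h => by have := hPoolnn k f; linarith)
          (fun f => Real.log (P i k f / (P i k f + Pool k f)))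
        have r4 := sum_filter_ext (Pool k) (hPoolnn k)
          (fun f => 0 < P i k f + Pool k f)
          (fun f h => by have := hPnn i k f; linarith)
          (fun f => Real.log (Pool k f / (P i k f + Pool k f)))
        rw [r1, r2, r3, r4, ← Finset.sum_add_distrib, ← Finset.sum_add_distrib]
        apply Finset.sum_le_sum
        intro f hf
        have hfpos : 0 < P i k f + Pool k f := by simpa using hf
        have hadm' := hadm f i k (mul_pos hk (mul_pos hi hfpos))
        exact aux_log_le (hPnn i k f) (hPoolnn k f) hadm'.1 hadm'.2
  · -- least upper bound
    intro b hb
    set l : Filter ℝ := nhdsWithin (0:ℝ) (Set.Ioi 0) with hl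
    have leaf : ∀ c d : ℝ, 0 < c → 0 < d →
        Filter.Tendsto (fun t : ℝ => Real.log ((c + t) / (d + 2*t))) l
          (nhds (Real.log (c / d))) := by
      intro c d hc hd
      have h1 : Filter.Tendsto (fun t : ℝ => c + t) l (nhds c) := by
        have hcont : Continuous (fun t : ℝ => c + t) := by fun_prop
        have h := hcont.tendsto (0:ℝ)
        simp only [add_zero] at h
        exact h.mono_left nhdsWithin_le_nhds
      have h2 : Filter.Tendsto (fun t : ℝ => d + 2*t) l (nhds d) := by
        have hcont : Continuous (fun t : ℝ => d + 2*t) := by fun_prop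
        have h := hcont.tendsto (0:ℝ)
        simp only [mul_zero, add_zero] at h
        exact h.mono_left nhdsWithin_le_nhds
      have h3 := h1.div h2 hd.ne'
      have h4 := (Real.continuousAt_log (ne_of_gt (div_pos hc hd))).tendsto.comp h3
      exact h4
    have htend : Filter.Tendsto
        (fun t : ℝ => ∑ k, β k * ∑ i, α k i *
          ((∑ f ∈ Finset.univ.filter (fun f => 0 < P i k f),
              P i k f * Real.log ((P i k f + t) / (P i k f + Pool k f + 2*t))) +
           (∑ f ∈ Finset.univ.filter (fun f => 0 < Pool k f),
              Pool k f * Real.log ((Pool k f + t) / (P i k f + Pool k f + 2*t))))) l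
        (nhds (∑ k, β k * ∑ i, α k i *
          ((∑ f ∈ Finset.univ.filter (fun f => 0 < P i k f),
              P i k f * Real.log (P i k f / (P i k f + Pool k f))) +
           (∑ f ∈ Finset.univ.filter (fun f => 0 < Pool k f),
              Pool k f * Real.log (Pool k f / (P i k f + Pool k f)))))) := by
      apply tendsto_finset_sum
      intro k _
      apply Filter.Tendsto.const_mul
      apply tendsto_finset_sum
      intro i _
      apply Filter.Tendsto.const_mul
      apply Filter.Tendsto.add
      · apply tendsto_finset_sum
        intro f hf
        have hPf : 0 < P i k f := by simpa using hf
        have hden : 0 < P i k f + Pool k f := by linarith [hPoolnn k f]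
        exact (leaf (P i k f) (P i k f + Pool k f) hPf hden).const_mul _
      · apply tendsto_finset_sum
        intro f hf
        have hPf : 0 < Pool k f := by simpa using hf
        have hden : 0 < P i k f + Pool k f := by linarith [hPnn i k f]
        exact (leaf (Pool k f) (P i k f + Pool k f) hPf hden).const_mul _
    refine le_of_tendsto htend ?_
    filter_upwards [self_mem_nhdsWithin] with t ht
    have htpos : (0:ℝ) < t := ht
    apply hb
    refine ⟨fun x => (P x.2.1 x.2.2 x.1 + t) / (P x.2.1 x.2.2 x.1 + Pool x.2.2 x.1 + 2*t),
      ?_, ?_, ?_⟩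
    · intro f i k
      have hden : 0 < P i k f + Pool k f + 2*t := by
        have := hPnn i k f; have := hPoolnn k f; linarith
      constructor
      · exact div_nonneg (by linarith [hPnn i k f]) hden.le
      · rw [div_le_one hden]
        linarith [hPoolnn k f]
    · intro f i k _
      have hden : 0 < P i k f + Pool k f + 2*t := by
        have := hPnn i k f; have := hPoolnn k f; linarith
      constructor
      · exact div_pos (by linarith [hPnn i k f]) hden
      · rw [div_lt_one hden]
        linarith [hPoolnn k f]
    · apply Finset.sum_congr rfl
      intro k _
      congr 1
      apply Finset.sum_congr rfl
      intro i _
      congr 1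
      congr 1
      apply Finset.sum_congr rfl
      intro f hf
      congr 2
      have hden : P i k f + Pool k f + 2*t ≠ 0 := by
        have := hPnn i k f; have := hPoolnn k f; positivity
      have e : 1 - (P i k f + t) / (P i k f + Pool k f + 2*t) = (Pool k f + t) / (P i k f + Pool k f + 2*t) := by
        rw [eq_div_iff hden, sub_mul, div_mul_cancel₀ _ hden]; ring
      simp only [e]
end

section
/- Let F be a nonempty finite type and let p, q be pmfs on F. Then the supremum, over all maps D : F → ℝ with 0 < D f < 1 whenever p f + q f > 0 and 0 ≤ D f ≤ 1 everywhere, of the value ∑_{f with p f > 0} p f · log (D f) + ∑_{f with q f > 0} q f · log (1 − D f) equals 2 · JSD(p ‖ q) − log 4. (The standard GAN discriminator identity used in the proof of the CADG-JSD theorem.) -/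
lemma pointwise_opt {a b x : ℝ} (ha : 0 < a) (hb : 0 < b) (hx0 : 0 < x) (hx1 : x < 1) :
    a * Real.log x + b * Real.log (1 - x) ≤
    a * Real.log (a / (a + b)) + b * Real.log (b / (a + b)) := by
  have hs : 0 < a + b := by linarith
  have h1x : 0 < 1 - x := by linarith
  have e1 : Real.log x - Real.log (a / (a + b)) = Real.log (x * (a + b) / a) := by
    rw [Real.log_div (by positivity) ha.ne', Real.log_mul hx0.ne' hs.ne',
      Real.log_div ha.ne' hs.ne']
    ring
  have e2 : Real.log (1 - x) - Real.log (b / (a + b)) = Real.log ((1 - x) * (a + b) / b) := by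
    rw [Real.log_div (by positivity) hb.ne', Real.log_mul h1x.ne' hs.ne',
      Real.log_div hb.ne' hs.ne']
    ring
  have i1 : Real.log (x * (a + b) / a) ≤ x * (a + b) / a - 1 :=
    Real.log_le_sub_one_of_pos (by positivity)
  have i2 : Real.log ((1 - x) * (a + b) / b) ≤ (1 - x) * (a + b) / b - 1 :=
    Real.log_le_sub_one_of_pos (by positivity)
  rw [← e1] at i1
  rw [← e2] at i2
  have A := mul_le_mul_of_nonneg_left i1 ha.le
  have B := mul_le_mul_of_nonneg_left i2 hb.le
  have hA : a * (x * (a + b) / a - 1) = x * (a + b) - a := by field_simp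
  have hB : b * ((1 - x) * (a + b) / b - 1) = (1 - x) * (a + b) - b := by field_simp
  rw [hA] at A
  rw [hB] at B
  nlinarith [A, B]

lemma pointwise_cases {a b x : ℝ} (ha : 0 ≤ a) (hb : 0 ≤ b) (hx0 : 0 ≤ x) (hx1 : x ≤ 1)
    (hstr : 0 < a + b → 0 < x ∧ x < 1) :
    (if 0 < a then a * Real.log x else 0) + (if 0 < b then b * Real.log (1 - x) else 0) ≤
    (if 0 < a then a * Real.log (a / (a + b)) else 0) +
    (if 0 < b then b * Real.log (b / (a + b)) else 0) := by
  by_cases hA : 0 < a <;> by_cases hB : 0 < b <;> simp [hA, hB]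
  · exact pointwise_opt hA hB (hstr (by linarith)).1 (hstr (by linarith)).2
  · have hb0 : b = 0 := le_antisymm (not_lt.1 hB) hb
    obtain ⟨hx0', hx1'⟩ := hstr (by linarith)
    have h2 : a / (a + b) = 1 := by rw [hb0, add_zero]; exact div_self hA.ne'
    rw [h2, Real.log_one]
    exact Real.log_nonpos hx0 hx1
  · have ha0 : a = 0 := le_antisymm (not_lt.1 hA) ha
    obtain ⟨hx0', hx1'⟩ := hstr (by linarith)
    have h2 : b / (a + b) = 1 := by rw [ha0, zero_add]; exact div_self hB.ne'
    rw [h2, Real.log_one]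
    exact Real.log_nonpos (by linarith) (by linarith)

lemma KL_half {F : Type*} [Fintype F] (p q : F → ℝ) (hpnn : ∀ f, 0 ≤ p f)
    (hqnn : ∀ f, 0 ≤ q f) (hpsum : ∑ f, p f = 1) :
    KL p (fun f => (p f + q f) / 2) =
      Real.log 2 +
      ∑ f ∈ Finset.univ.filter (fun f => 0 < p f), p f * Real.log (p f / (p f + q f)) := by
  unfold KL
  have hfil : ∑ f ∈ Finset.univ.filter (fun f => 0 < p f), p f = 1 := by
    rw [Finset.sum_filter_of_ne (fun f _ hf => lt_of_le_of_ne (hpnn f) (Ne.symm hf))]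
    exact hpsum
  have hcong : ∀ f ∈ Finset.univ.filter (fun f => 0 < p f),
      p f * Real.log (p f / ((p f + q f) / 2)) =
      p f * Real.log (p f / (p f + q f)) + p f * Real.log 2 := by
    intro f hf
    rw [Finset.mem_filter] at hf
    have hp : 0 < p f := hf.2
    have hs : 0 < p f + q f := by have := hqnn f; linarith
    have : p f / ((p f + q f) / 2) = p f / (p f + q f) * 2 := by field_simp
    rw [this, Real.log_mul (by positivity) two_ne_zero, mul_add]
  rw [Finset.sum_congr rfl hcong, Finset.sum_add_distrib, ← Finset.sum_mul, hfil]
  ring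

lemma contAux {a s : ℝ} (ha : 0 < a) (hs : 0 < s) (c : ℝ) :
    Filter.Tendsto (fun t : ℝ => c * Real.log ((a + t) / (s + 2 * t))) (nhds 0)
      (nhds (c * Real.log (a / s))) := by
  have h1 : ContinuousAt (fun t : ℝ => (a + t) / (s + 2 * t)) 0 :=
    ContinuousAt.div (by fun_prop) (by fun_prop) (by simpa using hs.ne')
  have h2 : ContinuousAt Real.log ((a + 0) / (s + 2 * 0)) :=
    Real.continuousAt_log (by positivity)
  have h3 : Filter.Tendsto (fun t : ℝ => Real.log ((a + t) / (s + 2 * t))) (nhds 0)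
      (nhds (Real.log ((a + 0) / (s + 2 * 0)))) := Filter.Tendsto.comp h2.tendsto h1.tendsto
  simpa using h3.const_mul c

/-- The standard GAN discriminator identity: the supremum over discriminators
`D : F → [0,1]` (strictly inside `(0,1)` on the support of `p + q`) of
`∑_{p f > 0} p f log (D f) + ∑_{q f > 0} q f log (1 - D f)` equals
`2 · JSD(p ‖ q) - log 4`. -/
theorem gan_discriminator_identity
    {F : Type*} [Fintype F] [Nonempty F]
    (p q : F → ℝ) (hpnn : ∀ f, 0 ≤ p f) (hpsum : ∑ f, p f = 1)
    (hqnn : ∀ f, 0 ≤ q f) (hqsum : ∑ f, q f = 1) :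
    IsLUB
      { v : ℝ | ∃ D : F → ℝ,
          (∀ f, 0 ≤ D f ∧ D f ≤ 1) ∧
          (∀ f, 0 < p f + q f → 0 < D f ∧ D f < 1) ∧
          v = (∑ f ∈ Finset.univ.filter (fun f => 0 < p f),
                 p f * Real.log (D f)) +
              (∑ f ∈ Finset.univ.filter (fun f => 0 < q f),
                 q f * Real.log (1 - D f)) }
      (2 * JSD p q - Real.log 4) := by
  classical
  set A := ∑ f ∈ Finset.univ.filter (fun f => 0 < p f), p f * Real.log (p f / (p f + q f))
    with hA
  set B := ∑ f ∈ Finset.univ.filter (fun f => 0 < q f), q f * Real.log (q f / (p f + q f))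
    with hB
  have hT : 2 * JSD p q - Real.log 4 = A + B := by
    unfold JSD
    rw [KL_half p q hpnn hqnn hpsum]
    have hq : KL q (fun f => (p f + q f) / 2) = Real.log 2 + B := by
      have hfun : (fun f => (p f + q f) / 2) = (fun f => (q f + p f) / 2) := by
        funext f; ring
      rw [hfun, KL_half q p hqnn hpnn hqsum, hB]
      congr 1
      exact Finset.sum_congr rfl (fun f _ => by rw [add_comm (q f) (p f)])
    rw [hq]
    have h4 : Real.log 4 = 2 * Real.log 2 := by
      rw [show (4:ℝ) = 2 ^ 2 by norm_num, Real.log_pow]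
      push_cast; ring
    rw [h4]; ring
  rw [hT]
  constructor
  · rintro v ⟨D, hD01, hDstr, rfl⟩
    rw [hA, hB]
    rw [Finset.sum_filter, Finset.sum_filter, ← Finset.sum_add_distrib,
      Finset.sum_filter, Finset.sum_filter, ← Finset.sum_add_distrib]
    exact Finset.sum_le_sum (fun f _ =>
      pointwise_cases (hpnn f) (hqnn f) (hD01 f).1 (hD01 f).2 (hDstr f))
  · intro u hu
    set g : ℝ → ℝ := fun t =>
      (∑ f ∈ Finset.univ.filter (fun f => 0 < p f),
        p f * Real.log ((p f + t) / (p f + q f + 2 * t))) +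
      (∑ f ∈ Finset.univ.filter (fun f => 0 < q f),
        q f * Real.log ((q f + t) / (p f + q f + 2 * t))) with hg
    have hmem : ∀ t ∈ Set.Ioi (0:ℝ), g t ≤ u := by
      intro t ht
      rw [Set.mem_Ioi] at ht
      apply hu
      refine ⟨fun f => if 0 < p f + q f then (p f + t) / (p f + q f + 2 * t) else 1 / 2,
        ?_, ?_, ?_⟩
      · intro f
        by_cases h : 0 < p f + q f
        · simp only [if_pos h]
          constructor
          · exact div_nonneg (by linarith [hpnn f]) (by linarith)
          · rw [div_le_one (by linarith)]
            have := hqnn f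
            have := hpnn f
            linarith
        · simp only [if_neg h]; norm_num
      · intro f h
        simp only [if_pos h]
        constructor
        · exact div_pos (by linarith [hpnn f]) (by linarith)
        · rw [div_lt_one (by linarith)]
          have := hqnn f
          have := hpnn f
          linarith
      · rw [hg]
        beta_reduce
        congr 1
        · apply Finset.sum_congr rfl
          intro f hf
          rw [Finset.mem_filter] at hf
          have h : 0 < p f + q f := by have := hqnn f; linarith [hf.2]
          rw [if_pos h]
        · apply Finset.sum_congr rfl
          intro f hf
          rw [Finset.mem_filter] at hf
          have h : 0 < p f + q f := by have := hpnn f; linarith [hf.2]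
          rw [if_pos h]
          congr 2
          have hd : (0:ℝ) < p f + q f + 2 * t := by linarith
          field_simp
          ring
    have hg0 : g 0 = A + B := by
      rw [hg, hA, hB]
      simp only [mul_zero, add_zero]
    have htend : Filter.Tendsto g (nhdsWithin 0 (Set.Ioi 0)) (nhds (A + B)) := by
      apply Filter.Tendsto.mono_left _ nhdsWithin_le_nhds
      rw [hg, hA, hB]
      apply Filter.Tendsto.add
      · apply tendsto_finset_sum
        intro f hf
        rw [Finset.mem_filter] at hf
        exact contAux hf.2 (by have := hqnn f; linarith [hf.2]) (p f)
      · apply tendsto_finset_sum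
        intro f hf
        rw [Finset.mem_filter] at hf
        exact contAux hf.2 (by have := hpnn f; linarith [hf.2]) (q f)
    exact le_of_tendsto htend (Filter.eventually_of_mem self_mem_nhdsWithin hmem)
end

section
/- Let F be a nonempty finite type and let p, q be pmfs on F. Define D* : F → ℝ by D* f = p f / (p f + q f) whenever p f + q f > 0 and D* f = 1/2 otherwise. Then 0 ≤ D* f ≤ 1 for all f, D* f > 0 whenever p f > 0, 1 − D* f > 0 whenever q f > 0, and ∑_{f with p f > 0} p f · log (D* f) + ∑_{f with q f > 0} q f · log (1 − D* f) = 2 · JSD(p ‖ q) − log 4; in particular D* attains the supremum of this objective over all D : F → [0,1] with 0 < D f < 1 wherever p f + q f > 0. -/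
/-- The GAN objective of a discriminator `D` against `p` and `q`. -/
noncomputable def ganObj {F : Type*} [Fintype F] (p q D : F → ℝ) : ℝ :=
  (∑ f ∈ Finset.univ.filter (fun f => 0 < p f), p f * Real.log (D f)) +
  (∑ f ∈ Finset.univ.filter (fun f => 0 < q f), q f * Real.log (1 - D f))

/-- The optimal GAN discriminator `D* f = p f / (p f + q f)` (and `1/2` where
`p f + q f = 0`) is admissible, achieves objective `2 · JSD(p ‖ q) - log 4`,
and attains the supremum over admissible discriminators. -/
theorem gan_optimal_discriminator
    {F : Type*} [Fintype F] [Nonempty F]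
    (p q : F → ℝ) (hpnn : ∀ f, 0 ≤ p f) (hpsum : ∑ f, p f = 1)
    (hqnn : ∀ f, 0 ≤ q f) (hqsum : ∑ f, q f = 1)
    (Dstar : F → ℝ)
    (hDstar : ∀ f, (0 < p f + q f → Dstar f = p f / (p f + q f)) ∧
                   (¬ 0 < p f + q f → Dstar f = 1 / 2)) :
    (∀ f, 0 ≤ Dstar f ∧ Dstar f ≤ 1) ∧
    (∀ f, 0 < p f → 0 < Dstar f) ∧
    (∀ f, 0 < q f → 0 < 1 - Dstar f) ∧
    ganObj p q Dstar = 2 * JSD p q - Real.log 4 ∧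
    (∀ D : F → ℝ, (∀ f, 0 ≤ D f ∧ D f ≤ 1) →
      (∀ f, 0 < p f + q f → 0 < D f ∧ D f < 1) →
      ganObj p q D ≤ ganObj p q Dstar) := by
  have hD01 : ∀ f, 0 ≤ Dstar f ∧ Dstar f ≤ 1 := by
    intro f
    rcases lt_or_ge 0 (p f + q f) with h | h
    · rw [(hDstar f).1 h]
      refine ⟨div_nonneg (hpnn f) h.le, ?_⟩
      rw [div_le_one h]; linarith [hqnn f]
    · rw [(hDstar f).2 (not_lt.2 h)]; norm_num
  have hDp : ∀ f, 0 < p f → 0 < Dstar f := by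
    intro f hp
    have hs : 0 < p f + q f := by linarith [hqnn f]
    rw [(hDstar f).1 hs]; exact div_pos hp hs
  have hsubq : ∀ f, 0 < p f + q f → 1 - Dstar f = q f / (p f + q f) := by
    intro f hs
    rw [(hDstar f).1 hs]
    field_simp
    ring
  have hDq : ∀ f, 0 < q f → 0 < 1 - Dstar f := by
    intro f hq
    have hs : 0 < p f + q f := by linarith [hpnn f]
    rw [hsubq f hs]; exact div_pos hq hs
  -- sums over filters equal total sums
  have hponef : ∑ f ∈ Finset.univ.filter (fun f => 0 < p f), p f = 1 := by
    rw [Finset.sum_filter_of_ne, hpsum]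
    intro f _ hne
    exact lt_of_le_of_ne (hpnn f) (Ne.symm hne)
  have hqonef : ∑ f ∈ Finset.univ.filter (fun f => 0 < q f), q f = 1 := by
    rw [Finset.sum_filter_of_ne, hqsum]
    intro f _ hne
    exact lt_of_le_of_ne (hqnn f) (Ne.symm hne)
  set A := ∑ f ∈ Finset.univ.filter (fun f => 0 < p f),
      p f * Real.log (p f / (p f + q f)) with hA
  set B := ∑ f ∈ Finset.univ.filter (fun f => 0 < q f),
      q f * Real.log (q f / (p f + q f)) with hB
  have hval : ganObj p q Dstar = A + B := by
    unfold ganObj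
    congr 1
    · refine Finset.sum_congr rfl fun f hf => ?_
      simp only [Finset.mem_filter] at hf
      have hs : 0 < p f + q f := by linarith [hqnn f, hf.2]
      rw [(hDstar f).1 hs]
    · refine Finset.sum_congr rfl fun f hf => ?_
      simp only [Finset.mem_filter] at hf
      have hs : 0 < p f + q f := by linarith [hpnn f, hf.2]
      rw [hsubq f hs]
  have hKLp : KL p (fun f => (p f + q f) / 2) = Real.log 2 + A := by
    unfold KL
    have hcong : ∀ f ∈ Finset.univ.filter (fun f => 0 < p f),
        p f * Real.log (p f / ((p f + q f) / 2)) =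
          p f * Real.log 2 + p f * Real.log (p f / (p f + q f)) := by
      intro f hf
      simp only [Finset.mem_filter] at hf
      have hp := hf.2
      have hs : 0 < p f + q f := by linarith [hqnn f]
      have h1 : p f / ((p f + q f) / 2) = 2 * (p f / (p f + q f)) := by
        field_simp
      rw [h1, Real.log_mul two_ne_zero (div_pos hp hs).ne', mul_add]
    rw [Finset.sum_congr rfl hcong, Finset.sum_add_distrib, ← Finset.sum_mul,
      hponef, one_mul]
  have hKLq : KL q (fun f => (p f + q f) / 2) = Real.log 2 + B := by
    unfold KL
    have hcong : ∀ f ∈ Finset.univ.filter (fun f => 0 < q f),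
        q f * Real.log (q f / ((p f + q f) / 2)) =
          q f * Real.log 2 + q f * Real.log (q f / (p f + q f)) := by
      intro f hf
      simp only [Finset.mem_filter] at hf
      have hq := hf.2
      have hs : 0 < p f + q f := by linarith [hpnn f]
      have h1 : q f / ((p f + q f) / 2) = 2 * (q f / (p f + q f)) := by
        field_simp
      rw [h1, Real.log_mul two_ne_zero (div_pos hq hs).ne', mul_add]
    rw [Finset.sum_congr rfl hcong, Finset.sum_add_distrib, ← Finset.sum_mul,
      hqonef, one_mul]
  have hobj : ganObj p q Dstar = 2 * JSD p q - Real.log 4 := by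
    rw [hval]
    unfold JSD
    rw [hKLp, hKLq]
    have h4 : Real.log 4 = 2 * Real.log 2 := by
      rw [show (4 : ℝ) = 2 ^ 2 by norm_num, Real.log_pow]; norm_num
    rw [h4]; ring
  refine ⟨hD01, hDp, hDq, hobj, ?_⟩
  intro D hDrange hDopen
  have hgan_eq : ∀ E : F → ℝ, ganObj p q E =
      ∑ f, (p f * Real.log (E f) + q f * Real.log (1 - E f)) := by
    intro E
    unfold ganObj
    rw [Finset.sum_add_distrib]
    congr 1
    · rw [Finset.sum_filter_of_ne]
      intro f _ hne
      by_contra h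
      have : p f = 0 := le_antisymm (not_lt.mp h) (hpnn f)
      simp [this] at hne
    · rw [Finset.sum_filter_of_ne]
      intro f _ hne
      by_contra h
      have : q f = 0 := le_antisymm (not_lt.mp h) (hqnn f)
      simp [this] at hne
  rw [hgan_eq D, hgan_eq Dstar]
  refine Finset.sum_le_sum fun f _ => ?_
  rcases lt_or_ge 0 (p f + q f) with hs | hs
  · -- main case
    have hDf := hDopen f hs
    have hD1 : (0:ℝ) < D f := hDf.1
    have hD2 : (0:ℝ) < 1 - D f := by linarith [hDf.2]
    have hDst : Dstar f = p f / (p f + q f) := (hDstar f).1 hs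
    have h1m : 1 - Dstar f = q f / (p f + q f) := hsubq f hs
    rcases (hpnn f).eq_or_lt with hp0 | hp
    · -- p f = 0
      have hq : 0 < q f := by linarith
      rw [h1m, hDst, ← hp0]
      simp only [zero_mul, zero_add]
      rw [div_self hq.ne', Real.log_one, mul_zero]
      exact mul_nonpos_of_nonneg_of_nonpos (hqnn f)
        (Real.log_nonpos hD2.le (by linarith))
    rcases (hqnn f).eq_or_lt with hq0 | hq
    · -- q f = 0
      rw [h1m, hDst, ← hq0]
      simp only [zero_mul, add_zero]
      rw [div_self hp.ne', Real.log_one, mul_zero]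
      exact mul_nonpos_of_nonneg_of_nonpos (hpnn f)
        (Real.log_nonpos hD1.le (by linarith [hDf.2]))
    · -- both positive
      rw [h1m, hDst]
      have hps : 0 < p f / (p f + q f) := div_pos hp hs
      have hqs : 0 < q f / (p f + q f) := div_pos hq hs
      have l1 : Real.log (D f) - Real.log (p f / (p f + q f)) ≤
          D f / (p f / (p f + q f)) - 1 := by
        have := Real.log_le_sub_one_of_pos (div_pos hD1 hps)
        rwa [Real.log_div hD1.ne' hps.ne'] at this
      have l2 : Real.log (1 - D f) - Real.log (q f / (p f + q f)) ≤
          (1 - D f) / (q f / (p f + q f)) - 1 := by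
        have := Real.log_le_sub_one_of_pos (div_pos hD2 hqs)
        rwa [Real.log_div hD2.ne' hqs.ne'] at this
      have e1 : p f * (D f / (p f / (p f + q f)) - 1) = D f * (p f + q f) - p f := by
        field_simp
      have e2 : q f * ((1 - D f) / (q f / (p f + q f)) - 1) =
          (1 - D f) * (p f + q f) - q f := by
        field_simp
      have m1 := mul_le_mul_of_nonneg_left l1 hp.le
      have m2 := mul_le_mul_of_nonneg_left l2 hq.le
      rw [e1] at m1
      rw [e2] at m2
      nlinarith [m1, m2]
  · -- p f + q f = 0
    have hp0 : p f = 0 := by linarith [hpnn f, hqnn f]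
    have hq0 : q f = 0 := by linarith [hpnn f, hqnn f]
    simp [hp0, hq0]
end
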